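/- Duality/summation-by-parts identity: let (p, q) solve the adjoint BS∆E p_n + q_n η_n = p_{n+1} + b_x*(n+1) p_{n+1} + b(n+1,n+1) σ_x*(n+1) q_{n+1} + l_x*(n+1) + σ_x*(n+1) p_{n+1} ξ_{n+1}^H with p_N = Φ_x(X*_N), q_N = 0, and let V solve the variation equation with V_0 = 0. Then, assuming b_x*(N) = σ_x*(N) = l_x*(N) = 0, E[Φ_x(X*_N) V_N] = − E Σ_{n=0}^{N-1} l_x*(n) V_n + E Σ_{n=0}^{N-1} [b_u*(n) p_n v_n + σ_u*(n) p_n v_n ξ_n^H + σ_u*(n) q_n v_n η_n ξ_n^H]. -/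

import Mathlib

/-!
Multiply the adjoint equation at step `n` by `V_{n+1}` and integrate. Expanding `V_{n+1}` by the
variation equation, the conditional identities `E[W η_n] = 0` and `E[W η_n ξ_n] = b(n,n) E[W]` turn
the left side into `Φ_n` plus the control terms at time `n`, where
`Φ_n = E[p_n (V_n + b_x*(n) V_n + σ_x*(n) V_n ξ_n)] + b(n,n) E[σ_x*(n) q_n V_n]`;
expanding `p_n + q_n η_n` by the adjoint equation turns it into `Φ_{n+1} + E[l_x*(n+1) V_{n+1}]`.
Summing over `n` telescopes from `Φ_0 = 0` (as `V_0 = 0`) to `Φ_N = E[p_N V_N]` (as `b_x*` and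
`σ_x*` vanish at `N`).
-/

open MeasureTheory

section

variable {Ω : Type*} {m0 : MeasurableSpace Ω} {P : Measure Ω}

theorem integrable_of_ae_eq_add₃ {f a b c : Ω → ℝ}
    (h : f =ᵐ[P] fun ω => a ω + b ω + c ω)
    (hf : Integrable f P) (ha : Integrable a P) (hb : Integrable b P) : Integrable c P :=
  ((hf.sub ha).sub hb).congr <| by
    filter_upwards [h] with ω hω
    simp only [Pi.sub_apply, hω]
    ring

theorem integral_eq_add₃_of_ae_eq {f a b c : Ω → ℝ}
    (h : f =ᵐ[P] fun ω => a ω + b ω + c ω)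
    (ha : Integrable a P) (hb : Integrable b P) (hc : Integrable c P) :
    ∫ ω, f ω ∂P = ∫ ω, a ω ∂P + ∫ ω, b ω ∂P + ∫ ω, c ω ∂P := by
  rw [integral_congr_ae h, integral_add _ hc, integral_add ha hb]
  exact ha.add hb

end

theorem eq_neg_sum_add_sum_of_succ_add_eq {G : Type*} [AddCommGroup G] {Φ L T : ℕ → G} {N : ℕ}
    (hΦ0 : Φ 0 = 0) (hL0 : L 0 = 0) (hLN : L N = 0)
    (hstep : ∀ n < N, Φ (n + 1) + L (n + 1) = Φ n + T n) :
    Φ N = -(∑ n ∈ Finset.range N, L n) + ∑ n ∈ Finset.range N, T n := by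
  have hshift : ∑ n ∈ Finset.range N, L (n + 1) = ∑ n ∈ Finset.range N, L n := by
    have h := Finset.sum_range_succ' L N
    rw [Finset.sum_range_succ, hL0, hLN] at h
    simpa using h.symm
  have hΦ : Φ N - Φ 0 = ∑ n ∈ Finset.range N, (T n - L (n + 1)) := by
    rw [← Finset.sum_range_sub]
    refine Finset.sum_congr rfl fun n hn => ?_
    rw [sub_eq_sub_iff_add_eq_add, hstep n (Finset.mem_range.mp hn), add_comm]
  rw [Finset.sum_sub_distrib, hshift, hΦ0, sub_zero] at hΦ
  rw [hΦ]
  abel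

section

variable {Ω : Type*} {m0 : MeasurableSpace Ω} {P : Measure Ω}
  {p q η ξ V v V' Bx Sx Bu Su : Ω → ℝ}

theorem integrable_mul_homogeneous_part
    (hV' : V' =ᵐ[P] fun ω => V ω + Bx ω * V ω + Bu ω * v ω + (Sx ω * V ω + Su ω * v ω) * ξ ω)
    (hpV' : Integrable (fun ω => p ω * V' ω) P)
    (hBu : Integrable (fun ω => Bu ω * p ω * v ω) P)
    (hSu : Integrable (fun ω => Su ω * p ω * v ω * ξ ω) P) :
    Integrable (fun ω => p ω * (V ω + Bx ω * V ω + Sx ω * V ω * ξ ω)) P :=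
  integrable_of_ae_eq_add₃ (by filter_upwards [hV'] with ω hω; rw [hω]; ring) hpV' hBu hSu

theorem integral_mul_succ_of_variation_eq {m : MeasurableSpace Ω} {b : ℝ}
    (hzero : ∀ W : Ω → ℝ, StronglyMeasurable[m] W →
      Integrable (fun ω => W ω * η ω) P → ∫ ω, W ω * η ω ∂P = 0)
    (hkey : ∀ W : Ω → ℝ, StronglyMeasurable[m] W →
      Integrable (fun ω => W ω * η ω * ξ ω) P → ∫ ω, W ω * η ω * ξ ω ∂P = b * ∫ ω, W ω ∂P)
    (hq : StronglyMeasurable[m] q) (hV : StronglyMeasurable[m] V)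
    (hv : StronglyMeasurable[m] v) (hBxm : StronglyMeasurable[m] Bx)
    (hSxm : StronglyMeasurable[m] Sx) (hBum : StronglyMeasurable[m] Bu)
    (hV' : V' =ᵐ[P] fun ω => V ω + Bx ω * V ω + Bu ω * v ω + (Sx ω * V ω + Su ω * v ω) * ξ ω)
    (hpV' : Integrable (fun ω => p ω * V' ω) P)
    (hqηV' : Integrable (fun ω => V' ω * q ω * η ω) P)
    (hBu : Integrable (fun ω => Bu ω * p ω * v ω) P)
    (hSu : Integrable (fun ω => Su ω * p ω * v ω * ξ ω) P)
    (hSuq : Integrable (fun ω => Su ω * q ω * v ω * η ω * ξ ω) P)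
    (hSxq : Integrable (fun ω => Sx ω * q ω * V ω * η ω * ξ ω) P) :
    ∫ ω, (p ω + q ω * η ω) * V' ω ∂P =
      ∫ ω, p ω * (V ω + Bx ω * V ω + Sx ω * V ω * ξ ω) ∂P + b * ∫ ω, Sx ω * q ω * V ω ∂P
        + ∫ ω, (Bu ω * p ω * v ω + Su ω * p ω * v ω * ξ ω
          + Su ω * q ω * v ω * η ω * ξ ω) ∂P := by
  have hhom := integrable_mul_homogeneous_part hV' hpV' hBu hSu
  have hqηV'_eq : (fun ω => V' ω * q ω * η ω) =ᵐ[P] fun ω => Su ω * q ω * v ω * η ω * ξ ω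
      + Sx ω * q ω * V ω * η ω * ξ ω + q ω * (V ω + Bx ω * V ω + Bu ω * v ω) * η ω := by
    filter_upwards [hV'] with ω hω
    rw [hω]
    ring
  have hdrift := integrable_of_ae_eq_add₃ hqηV'_eq hqηV' hSuq hSxq
  have hdrift_zero : ∫ ω, q ω * (V ω + Bx ω * V ω + Bu ω * v ω) * η ω ∂P = 0 :=
    hzero _ (hq.mul ((hV.add (hBxm.mul hV)).add (hBum.mul hv))) hdrift
  have hkey' : ∫ ω, Sx ω * q ω * V ω * η ω * ξ ω ∂P = b * ∫ ω, Sx ω * q ω * V ω ∂P :=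
    hkey _ ((hSxm.mul hq).mul hV) hSxq
  calc ∫ ω, (p ω + q ω * η ω) * V' ω ∂P
      = ∫ ω, p ω * V' ω ∂P + ∫ ω, V' ω * q ω * η ω ∂P := by
        rw [← integral_add hpV' hqηV']
        congr 1 with ω
        ring
    _ = (∫ ω, p ω * (V ω + Bx ω * V ω + Sx ω * V ω * ξ ω) ∂P + ∫ ω, Bu ω * p ω * v ω ∂P
          + ∫ ω, Su ω * p ω * v ω * ξ ω ∂P)
        + (∫ ω, Su ω * q ω * v ω * η ω * ξ ω ∂P + ∫ ω, Sx ω * q ω * V ω * η ω * ξ ω ∂P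
          + ∫ ω, q ω * (V ω + Bx ω * V ω + Bu ω * v ω) * η ω ∂P) := by
        rw [integral_eq_add₃_of_ae_eq hqηV'_eq hSuq hSxq hdrift,
          integral_eq_add₃_of_ae_eq (by filter_upwards [hV'] with ω hω; rw [hω]; ring)
            hhom hBu hSu]
    _ = _ := by
        rw [hdrift_zero, hkey', integral_eq_add₃_of_ae_eq (Filter.Eventually.of_forall fun _ => rfl)
          hBu hSu hSuq]
        ring

theorem integral_mul_succ_of_adjoint_eq {p' q' V' Bx' Sx' Lx' ξ' : Ω → ℝ} {b' : ℝ}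
    (hadj : (fun ω => p ω + q ω * η ω) =ᵐ[P] fun ω => p' ω + Bx' ω * p' ω
      + b' * Sx' ω * q' ω + Lx' ω + Sx' ω * p' ω * ξ' ω)
    (hpV' : Integrable (fun ω => p ω * V' ω) P)
    (hqηV' : Integrable (fun ω => V' ω * q ω * η ω) P)
    (hhom : Integrable (fun ω => p' ω * (V' ω + Bx' ω * V' ω + Sx' ω * V' ω * ξ' ω)) P)
    (hL : Integrable (fun ω => Lx' ω * V' ω) P) :
    ∫ ω, (p ω + q ω * η ω) * V' ω ∂P =
      ∫ ω, p' ω * (V' ω + Bx' ω * V' ω + Sx' ω * V' ω * ξ' ω) ∂P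
        + b' * ∫ ω, Sx' ω * q' ω * V' ω ∂P + ∫ ω, Lx' ω * V' ω ∂P := by
  have hsplit : (fun ω => (p ω + q ω * η ω) * V' ω) =ᵐ[P] fun ω =>
      p' ω * (V' ω + Bx' ω * V' ω + Sx' ω * V' ω * ξ' ω) + Lx' ω * V' ω
        + b' * (Sx' ω * q' ω * V' ω) := by
    filter_upwards [hadj] with ω hω
    rw [hω]
    ring
  have hint : Integrable (fun ω => (p ω + q ω * η ω) * V' ω) P :=
    (hpV'.add hqηV').congr <| Filter.Eventually.of_forall fun ω => by
      simp only [Pi.add_apply]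
      ring
  rw [integral_eq_add₃_of_ae_eq hsplit hhom hL (integrable_of_ae_eq_add₃ hsplit hint hhom hL),
    integral_const_mul]
  ring

end

theorem duality_identity_general
    {Ω : Type*} [m0 : MeasurableSpace Ω] (P : Measure Ω)
    (N : ℕ)
    (F : ℕ → MeasurableSpace Ω)
    (ξ η : ℕ → Ω → ℝ)
    -- key conditional identities for the whitened noise:
    -- `E[W η_n] = 0` and `E[W η_n ξ_n] = b(n,n) E[W]` for `F_n`-measurable `W`
    (bdiag : ℕ → ℝ)
    (hzero : ∀ n < N, ∀ W : Ω → ℝ, StronglyMeasurable[F n] W →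
      Integrable (fun ω => W ω * η n ω) P → ∫ ω, W ω * η n ω ∂P = 0)
    (hkey : ∀ n < N, ∀ W : Ω → ℝ, StronglyMeasurable[F n] W →
      Integrable (fun ω => W ω * η n ω * ξ n ω) P →
      ∫ ω, W ω * η n ω * ξ n ω ∂P = bdiag n * ∫ ω, W ω ∂P)
    -- coefficient processes `b_x*(n), σ_x*(n), l_x*(n), b_u*(n), σ_u*(n)`
    (Bx Sx Lx Bu Su : ℕ → Ω → ℝ)
    (hcoefmeas : ∀ n ≤ N, StronglyMeasurable[F n] (Bx n) ∧
      StronglyMeasurable[F n] (Sx n) ∧ StronglyMeasurable[F n] (Lx n) ∧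
      StronglyMeasurable[F n] (Bu n) ∧ StronglyMeasurable[F n] (Su n))
    (hBxN : ∀ ω, Bx N ω = 0) (hSxN : ∀ ω, Sx N ω = 0) (hLxN : ∀ ω, Lx N ω = 0)
    -- adjoint pair `(p, q)` and variation pair `(V, v)`: adapted and square integrable
    (p q V v : ℕ → Ω → ℝ)
    (hpmeas : ∀ n ≤ N, StronglyMeasurable[F n] (p n) ∧
      StronglyMeasurable[F n] (q n) ∧ StronglyMeasurable[F n] (V n) ∧
      StronglyMeasurable[F n] (v n))
    (hpLp : ∀ n ≤ N, MemLp (p n) 2 P ∧ MemLp (q n) 2 P ∧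
      MemLp (V n) 2 P ∧ MemLp (v n) 2 P)
    -- the adjoint backward equation
    (hadj : ∀ n < N, (fun ω => p n ω + q n ω * η n ω) =ᵐ[P]
      fun ω => p (n + 1) ω + Bx (n + 1) ω * p (n + 1) ω
        + bdiag (n + 1) * Sx (n + 1) ω * q (n + 1) ω
        + Lx (n + 1) ω + Sx (n + 1) ω * p (n + 1) ω * ξ (n + 1) ω)
    -- the variation equation
    (hV0 : V 0 =ᵐ[P] fun _ => 0)
    (hVeq : ∀ n < N, V (n + 1) =ᵐ[P]
      fun ω => V n ω + Bx n ω * V n ω + Bu n ω * v n ω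
        + (Sx n ω * V n ω + Su n ω * v n ω) * ξ n ω)
    -- integrability of the products appearing in the computation
    (hint1 : ∀ n ≤ N, Integrable (fun ω => p n ω * V n ω) P)
    (hint2 : ∀ n < N, Integrable (fun ω => Lx n ω * V n ω) P ∧
      Integrable (fun ω => Bu n ω * p n ω * v n ω) P ∧
      Integrable (fun ω => Su n ω * p n ω * v n ω * ξ n ω) P ∧
      Integrable (fun ω => Su n ω * q n ω * v n ω * η n ω * ξ n ω) P ∧
      Integrable (fun ω => V (n + 1) ω * q n ω * η n ω) P ∧
      Integrable (fun ω => Sx n ω * q n ω * V n ω * η n ω * ξ n ω) P ∧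
      Integrable (fun ω => Sx n ω * p n ω * V n ω * ξ n ω) P) :
    ∫ ω, p N ω * V N ω ∂P =
      - (∑ n ∈ Finset.range N, ∫ ω, Lx n ω * V n ω ∂P)
      + ∑ n ∈ Finset.range N, ∫ ω, (Bu n ω * p n ω * v n ω
          + Su n ω * p n ω * v n ω * ξ n ω
          + Su n ω * q n ω * v n ω * η n ω * ξ n ω) ∂P := by
  have hpV : ∀ n < N, Integrable (fun ω => p n ω * V (n + 1) ω) P := fun n hn =>
    (hpLp n hn.le).1.integrable_mul (hpLp (n + 1) hn).2.2.1
  have hhom : ∀ n ≤ N, Integrable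
      (fun ω => p n ω * (V n ω + Bx n ω * V n ω + Sx n ω * V n ω * ξ n ω)) P := by
    intro n hn
    rcases hn.lt_or_eq with hn | rfl
    · exact integrable_mul_homogeneous_part (hVeq n hn) (hpV n hn) (hint2 n hn).2.1
        (hint2 n hn).2.2.1
    · simpa [hBxN, hSxN] using hint1 n le_rfl
  have hL : ∀ n ≤ N, Integrable (fun ω => Lx n ω * V n ω) P := by
    intro n hn
    rcases hn.lt_or_eq with hn | rfl
    · exact (hint2 n hn).1
    · simp [hLxN]
  have hΦN : ∫ ω, p N ω * V N ω ∂P =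
      ∫ ω, p N ω * (V N ω + Bx N ω * V N ω + Sx N ω * V N ω * ξ N ω) ∂P
        + bdiag N * ∫ ω, Sx N ω * q N ω * V N ω ∂P := by
    simp [hBxN, hSxN]
  rw [hΦN]
  refine eq_neg_sum_add_sum_of_succ_add_eq
    (Φ := fun n => ∫ ω, p n ω * (V n ω + Bx n ω * V n ω + Sx n ω * V n ω * ξ n ω) ∂P
      + bdiag n * ∫ ω, Sx n ω * q n ω * V n ω ∂P) ?_ ?_ (by simp [hLxN]) fun n hn => ?_
  · rw [integral_eq_zero_of_ae (by filter_upwards [hV0] with ω hω; simp [hω]),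
      integral_eq_zero_of_ae (by filter_upwards [hV0] with ω hω; simp [hω])]
    simp
  · exact integral_eq_zero_of_ae (by filter_upwards [hV0] with ω hω; simp [hω])
  obtain ⟨-, hBu, hSu, hSuq, hqηV, hSxq, -⟩ := hint2 n hn
  obtain ⟨-, hq, hV, hv⟩ := hpmeas n hn.le
  obtain ⟨hBx, hSx, -, hBum, -⟩ := hcoefmeas n hn.le
  rw [← integral_mul_succ_of_adjoint_eq (hadj n hn) (hpV n hn) hqηV (hhom (n + 1) hn)
      (hL (n + 1) hn),
    integral_mul_succ_of_variation_eq (hzero n hn) (hkey n hn) hq hV hv hBx hSx hBum (hVeq n hn)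
      (hpV n hn) hqηV hBu hSu hSuq hSxq]

/-- Duality (summation-by-parts) identity between the adjoint BS∆E
`p_n + q_n η_n = p_{n+1} + b_x*(n+1) p_{n+1} + b(n+1,n+1) σ_x*(n+1) q_{n+1}
  + l_x*(n+1) + σ_x*(n+1) p_{n+1} ξ_{n+1}` (with `p_N = Φ_x(X*_N)`, `q_N = 0`)
and the variation equation
`V_{n+1} = V_n + b_x*(n)V_n + b_u*(n)v_n + [σ_x*(n)V_n + σ_u*(n)v_n] ξ_n`, `V_0 = 0`:
`E[Φ_x(X*_N) V_N] = −E ∑_{n<N} l_x*(n) V_n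
  + E ∑_{n<N} [b_u*(n) p_n v_n + σ_u*(n) p_n v_n ξ_n + σ_u*(n) q_n v_n η_n ξ_n]`. -/
theorem duality_identity
    {Ω : Type*} [m0 : MeasurableSpace Ω] (P : Measure Ω) [IsProbabilityMeasure P]
    (N : ℕ) (hN : 1 ≤ N)
    (F : ℕ → MeasurableSpace Ω) (hFle : ∀ n, F n ≤ m0)
    (ξ η : ℕ → Ω → ℝ)
    (hξmeas : ∀ n, Measurable[F (n + 1)] (ξ n))
    (hηmeas : ∀ n, Measurable[F (n + 1)] (η n))
    -- key conditional identities for the whitened noise: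
    -- `E[W η_n] = 0` and `E[W η_n ξ_n] = b(n,n) E[W]` for `F_n`-measurable `W`
    (bdiag : ℕ → ℝ)
    (hzero : ∀ n < N, ∀ W : Ω → ℝ, StronglyMeasurable[F n] W →
      Integrable (fun ω => W ω * η n ω) P → ∫ ω, W ω * η n ω ∂P = 0)
    (hkey : ∀ n < N, ∀ W : Ω → ℝ, StronglyMeasurable[F n] W →
      Integrable (fun ω => W ω * η n ω * ξ n ω) P →
      ∫ ω, W ω * η n ω * ξ n ω ∂P = bdiag n * ∫ ω, W ω ∂P)
    -- coefficient processes `b_x*(n), σ_x*(n), l_x*(n), b_u*(n), σ_u*(n)`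
    (Bx Sx Lx Bu Su : ℕ → Ω → ℝ)
    (hcoefmeas : ∀ n ≤ N, StronglyMeasurable[F n] (Bx n) ∧
      StronglyMeasurable[F n] (Sx n) ∧ StronglyMeasurable[F n] (Lx n) ∧
      StronglyMeasurable[F n] (Bu n) ∧ StronglyMeasurable[F n] (Su n))
    (hBxN : ∀ ω, Bx N ω = 0) (hSxN : ∀ ω, Sx N ω = 0) (hLxN : ∀ ω, Lx N ω = 0)
    -- adjoint pair `(p, q)` and variation pair `(V, v)`: adapted and square integrable
    (p q V v : ℕ → Ω → ℝ)
    (hpmeas : ∀ n ≤ N, StronglyMeasurable[F n] (p n) ∧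
      StronglyMeasurable[F n] (q n) ∧ StronglyMeasurable[F n] (V n) ∧
      StronglyMeasurable[F n] (v n))
    (hpLp : ∀ n ≤ N, MemLp (p n) 2 P ∧ MemLp (q n) 2 P ∧
      MemLp (V n) 2 P ∧ MemLp (v n) 2 P)
    (hqN : q N =ᵐ[P] fun _ => 0)
    -- the adjoint backward equation
    (hadj : ∀ n < N, (fun ω => p n ω + q n ω * η n ω) =ᵐ[P]
      fun ω => p (n + 1) ω + Bx (n + 1) ω * p (n + 1) ω
        + bdiag (n + 1) * Sx (n + 1) ω * q (n + 1) ω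
        + Lx (n + 1) ω + Sx (n + 1) ω * p (n + 1) ω * ξ (n + 1) ω)
    -- the variation equation
    (hV0 : V 0 =ᵐ[P] fun _ => 0)
    (hVeq : ∀ n < N, V (n + 1) =ᵐ[P]
      fun ω => V n ω + Bx n ω * V n ω + Bu n ω * v n ω
        + (Sx n ω * V n ω + Su n ω * v n ω) * ξ n ω)
    -- integrability of the products appearing in the computation
    (hint1 : ∀ n ≤ N, Integrable (fun ω => p n ω * V n ω) P)
    (hint2 : ∀ n < N, Integrable (fun ω => Lx n ω * V n ω) P ∧
      Integrable (fun ω => Bu n ω * p n ω * v n ω) P ∧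
      Integrable (fun ω => Su n ω * p n ω * v n ω * ξ n ω) P ∧
      Integrable (fun ω => Su n ω * q n ω * v n ω * η n ω * ξ n ω) P ∧
      Integrable (fun ω => V (n + 1) ω * q n ω * η n ω) P ∧
      Integrable (fun ω => Sx n ω * q n ω * V n ω * η n ω * ξ n ω) P ∧
      Integrable (fun ω => Sx n ω * p n ω * V n ω * ξ n ω) P) :
    ∫ ω, p N ω * V N ω ∂P =
      - (∑ n ∈ Finset.range N, ∫ ω, Lx n ω * V n ω ∂P)
      + ∑ n ∈ Finset.range N, ∫ ω, (Bu n ω * p n ω * v n ω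
          + Su n ω * p n ω * v n ω * ξ n ω
          + Su n ω * q n ω * v n ω * η n ω * ξ n ω) ∂P :=
  duality_identity_general (m0 := m0) P N F ξ η bdiag hzero hkey Bx Sx Lx Bu Su hcoefmeas hBxN hSxN
    hLxN p q V v hpmeas hpLp hadj hV0 hVeq hint1 hint2
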